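/- Hyperplane (matrix) representation of the Dirichlet matroid: let u: B → ℝ be injective. For each edge e of Γ define a vector v_e ∈ ℝ^{V∖B} × ℝ by: v_e = χ_i − χ_j if e = ij with i,j ∈ V∖B, and v_e = χ_i − u(j)·δ if e = ij with i ∈ V∖B and j ∈ B, where χ_i denotes the standard basis vector indexed by i ∈ V∖B and δ = (0,1) spans the extra coordinate; also set v_ê = δ. Then for every X ⊆ Ē = E ∪ {ê}, the family (v_e)_{e∈X} is linearly independent over ℝ if and only if X ⊆ F for some F ∈ Σ₁ or X ⊆ F ∪ {ê} for some F ∈ Σ₀; equivalently, (v_e)_{e∈X} is linearly dependent if and only if X contains the edge set of a cycle of Γ, or X contains two distinct crossings of N, or X contains ê together with a crossing of N. -/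

import Mathlib

/-!
Every edge vector is a difference `φ i - φ j` of the potential `φ` sending an interior vertex to
its basis vector and a boundary node `b` to `u b • δ`. Along a trail these differences telescope:
a cycle yields a relation among its edges, and a crossing from `b` to `b' ≠ b` spans
`(u b - u b') • δ`, hence `δ`, which gives the relations for two distinct crossings and for `ê`
together with a crossing.

Conversely, an unobstructed set is peeled one vector at a time. If an interior vertex lies on
exactly one of its edges, that edge vector is the only one with a nonzero coordinate there.
Otherwise its edges form a forest without interior leaves, so every edge extends to a crossing;
there is only one crossing, and its first edge is the only vector not killed by the functional
that is `u` on boundary potentials and `u b'` on interior ones, `b'` being the far endpoint.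

Combinatorially, a maximal unobstructed superset is a grove: an edge leaving a component without
boundary nodes can always be added without creating a cycle or a new crossing.
-/

open scoped BigOperators Classical

noncomputable section

namespace DirichletPaper

variable {V : Type*} [Fintype V] [DecidableEq V]

/-- `(Γ, B)` is a network: `Γ` is a connected finite simple graph, there are at
least two boundary nodes, and no edge of `Γ` joins two boundary nodes. -/
structure IsNetwork (Γ : SimpleGraph V) (B : Finset V) : Prop where
  connected : Γ.Connected
  two_le_card : 2 ≤ B.card
  boundary_independent : ∀ i ∈ B, ∀ j ∈ B, ¬ Γ.Adj i j

/-- A crossing of the network `(Γ, B)`: the edge set of a simple path in `Γ`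
whose two endpoints are distinct boundary nodes and all of whose internal
vertices are interior (i.e. lie in `V ∖ B`). -/
def IsCrossing (Γ : SimpleGraph V) (B : Finset V) (X : Finset (Sym2 V)) : Prop :=
  ∃ (i j : V) (p : Γ.Walk i j), p.IsPath ∧ i ∈ B ∧ j ∈ B ∧ i ≠ j ∧
    (∀ v ∈ p.support, v ≠ i → v ≠ j → v ∉ B) ∧ X = p.edges.toFinset

/-- A grove of the network `(Γ, B)`: an acyclic edge set `F ⊆ E` such that every
interior vertex is incident to an edge of `F` and every connected component of
the forest `F` contains a boundary node. -/
def IsGrove (Γ : SimpleGraph V) (B : Finset V) (F : Finset (Sym2 V)) : Prop :=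
  (F : Set (Sym2 V)) ⊆ Γ.edgeSet ∧
  (SimpleGraph.fromEdgeSet (F : Set (Sym2 V))).IsAcyclic ∧
  (∀ v : V, v ∉ B → ∃ e ∈ F, v ∈ e) ∧
  (∀ v : V, ∃ b ∈ B, (SimpleGraph.fromEdgeSet (F : Set (Sym2 V))).Reachable v b)

/-- `Σ₁`: groves containing exactly one crossing. -/
def Sigma1 (Γ : SimpleGraph V) (B : Finset V) (F : Finset (Sym2 V)) : Prop :=
  IsGrove Γ B F ∧ ∃! C : Finset (Sym2 V), IsCrossing Γ B C ∧ C ⊆ F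

/-- `Σ₀`: groves containing no crossing. -/
def Sigma0 (Γ : SimpleGraph V) (B : Finset V) (F : Finset (Sym2 V)) : Prop :=
  IsGrove Γ B F ∧ ∀ C : Finset (Sym2 V), IsCrossing Γ B C → ¬ C ⊆ F

/-- The generating function `∑_{F ∈ S} ∏_{e ∈ F} x_e`. -/
def groveSum (R : Type*) [CommRing R] (S : Finset (Sym2 V) → Prop) (x : Sym2 V → R) : R :=
  ∑ F ∈ Finset.univ.filter S, ∏ e ∈ F, x e

/-- `P₀(x) = ∑_{F ∈ Σ₀} ∏_{e ∈ F} x_e`. -/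
def P0 (R : Type*) [CommRing R] (Γ : SimpleGraph V) (B : Finset V) (x : Sym2 V → R) : R :=
  groveSum R (Sigma0 Γ B) x

/-- `P₁(x) = ∑_{F ∈ Σ₁} ∏_{e ∈ F} x_e`. -/
def P1 (R : Type*) [CommRing R] (Γ : SimpleGraph V) (B : Finset V) (x : Sym2 V → R) : R :=
  groveSum R (Sigma1 Γ B) x

/-- The ground set `Ē = E ∪ {ê}` of the Dirichlet matroid, realized inside
`Option (Sym2 V)`, with `ê = none` and an edge `e` realized as `some e`. -/
def ground (Γ : SimpleGraph V) : Finset (Option (Sym2 V)) :=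
  insert none ((Finset.univ.filter (· ∈ Γ.edgeSet)).image some)

/-- Independent sets of the Dirichlet matroid `M(N)`: subsets of `F` for some
`F ∈ Σ₁`, or subsets of `F ∪ {ê}` for some `F ∈ Σ₀`. -/
def Indep (Γ : SimpleGraph V) (B : Finset V) (X : Finset (Option (Sym2 V))) : Prop :=
  (∃ F, Sigma1 Γ B F ∧ X ⊆ F.image some) ∨
  (∃ F, Sigma0 Γ B F ∧ X ⊆ insert none (F.image some))

/-- Bases of `M(N)`: maximal independent sets. -/
def IsBasis (Γ : SimpleGraph V) (B : Finset V) (X : Finset (Option (Sym2 V))) : Prop :=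
  Indep Γ B X ∧ ∀ Y, Indep Γ B Y → X ⊆ Y → Y = X

/-- Circuits of `M(N)`: minimal dependent subsets of the ground set. -/
def IsCircuit (Γ : SimpleGraph V) (B : Finset V) (X : Finset (Option (Sym2 V))) : Prop :=
  X ⊆ ground Γ ∧ ¬ Indep Γ B X ∧ ∀ Y ⊂ X, Indep Γ B Y

/-- The rank function of `M(N)`. -/
def rk (Γ : SimpleGraph V) (B : Finset V) (X : Finset (Option (Sym2 V))) : ℕ :=
  (X.powerset.filter (Indep Γ B)).sup Finset.card

/-- Independent sets of the graphic matroid of `G`: edge sets of forests. -/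
def IndepG (G : SimpleGraph V) (X : Finset (Sym2 V)) : Prop :=
  (X : Set (Sym2 V)) ⊆ G.edgeSet ∧ (SimpleGraph.fromEdgeSet (X : Set (Sym2 V))).IsAcyclic

/-- Circuits of the graphic matroid of `G`. -/
def IsCircuitG (G : SimpleGraph V) (X : Finset (Sym2 V)) : Prop :=
  (X : Set (Sym2 V)) ⊆ G.edgeSet ∧ ¬ IndepG G X ∧ ∀ Y ⊂ X, IndepG G Y

/-- The edge set of `G` as a `Finset`. -/
def edgeFinset' (G : SimpleGraph V) : Finset (Sym2 V) :=
  Finset.univ.filter (· ∈ G.edgeSet)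

/-- The rank function of the graphic matroid of `G`. -/
def rkG (G : SimpleGraph V) (X : Finset (Sym2 V)) : ℕ :=
  (X.powerset.filter (IndepG G)).sup Finset.card

/-- The characteristic polynomial `χ(λ) = ∑_{X ⊆ S} (-1)^{|X|} λ^{r(S) - r(X)}`
of a matroid with ground set `S` and rank function `r`. -/
def charPolyOf {α : Type*} [DecidableEq α] (S : Finset α) (r : Finset α → ℕ) : Polynomial ℤ :=
  ∑ X ∈ S.powerset, Polynomial.C ((-1 : ℤ) ^ X.card) * Polynomial.X ^ (r S - r X)

/-- The graph `Γ̂` obtained from `Γ` by adding an edge between each pair of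
distinct boundary nodes. -/
def hatGraph (Γ : SimpleGraph V) (B : Finset V) : SimpleGraph V where
  Adj i j := Γ.Adj i j ∨ (i ∈ B ∧ j ∈ B ∧ i ≠ j)
  symm := by
    constructor
    intro i j h
    rcases h with h | ⟨hi, hj, hne⟩
    · exact Or.inl h.symm
    · exact Or.inr ⟨hj, hi, hne.symm⟩
  loopless := by
    constructor
    intro i h
    rcases h with h | ⟨-, -, hne⟩
    · exact Γ.ne_of_adj h rfl
    · exact hne rfl

/-- The weighted Laplacian matrix of `Γ` with edge weights `x`. -/
def lap (Γ : SimpleGraph V) (x : Sym2 V → ℂ) : Matrix V V ℂ := fun i j =>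
  if i = j then ∑ k ∈ Finset.univ.filter (fun k => Γ.Adj i k), x s(i, k)
  else if Γ.Adj i j then -x s(i, j) else 0

/-- The boundary-boundary block `A` of the Laplacian. -/
def lapA (Γ : SimpleGraph V) (B : Finset V) (x : Sym2 V → ℂ) :
    Matrix {v : V // v ∈ B} {v : V // v ∈ B} ℂ :=
  (lap Γ x).submatrix Subtype.val Subtype.val

/-- The interior-interior block `D` of the Laplacian. -/
def lapD (Γ : SimpleGraph V) (B : Finset V) (x : Sym2 V → ℂ) :
    Matrix {v : V // v ∉ B} {v : V // v ∉ B} ℂ :=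
  (lap Γ x).submatrix Subtype.val Subtype.val

/-- The boundary-interior block `B₀` of the Laplacian. -/
def lapB (Γ : SimpleGraph V) (B : Finset V) (x : Sym2 V → ℂ) :
    Matrix {v : V // v ∈ B} {v : V // v ∉ B} ℂ :=
  (lap Γ x).submatrix Subtype.val Subtype.val

/-- The response matrix `Λ(x) = A - B₀ D⁻¹ B₀ᵀ` of the network. -/
def response (Γ : SimpleGraph V) (B : Finset V) (x : Sym2 V → ℂ) :
    Matrix {v : V // v ∈ B} {v : V // v ∈ B} ℂ :=
  lapA Γ B x - lapB Γ B x * (lapD Γ B x)⁻¹ * (lapB Γ B x).transpose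

/-- `P₀` as a real multivariate polynomial in the variables `x_e`. -/
def P0mv (Γ : SimpleGraph V) (B : Finset V) : MvPolynomial (Sym2 V) ℝ :=
  ∑ F ∈ Finset.univ.filter (Sigma0 Γ B), ∏ e ∈ F, MvPolynomial.X e

/-- `P₁` as a real multivariate polynomial in the variables `x_e`. -/
def P1mv (Γ : SimpleGraph V) (B : Finset V) : MvPolynomial (Sym2 V) ℝ :=
  ∑ F ∈ Finset.univ.filter (Sigma1 Γ B), ∏ e ∈ F, MvPolynomial.X e

/-- `E_{ef}(g, h) = ∂_e g · ∂_f h + ∂_f g · ∂_e h - g · ∂_e ∂_f h - ∂_e ∂_f g · h`. -/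
def Emix {σ : Type*} (e f : σ) (g h : MvPolynomial σ ℝ) : MvPolynomial σ ℝ :=
  MvPolynomial.pderiv e g * MvPolynomial.pderiv f h +
    MvPolynomial.pderiv f g * MvPolynomial.pderiv e h -
    g * MvPolynomial.pderiv e (MvPolynomial.pderiv f h) -
    MvPolynomial.pderiv e (MvPolynomial.pderiv f g) * h

/-- `Δ_{ef}(g) = ∂_e g · ∂_f g - g · ∂_e ∂_f g`, the Rayleigh difference. -/
def Delta {σ : Type*} (e f : σ) (g : MvPolynomial σ ℝ) : MvPolynomial σ ℝ :=
  MvPolynomial.pderiv e g * MvPolynomial.pderiv f g -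
    g * MvPolynomial.pderiv e (MvPolynomial.pderiv f g)

/-- The block of the network containing the vertex `i`: all `j ∈ V` reachable
from `i` by a path all of whose vertices except possibly the final one are
interior. -/
def blockOf (Γ : SimpleGraph V) (B : Finset V) (i : V) : Finset V :=
  Finset.univ.filter (fun j => ∃ p : Γ.Walk i j, p.IsPath ∧ ∀ v ∈ p.support, v ≠ j → v ∉ B)

end DirichletPaper

section LinearAlgebra

variable {ι R K M N : Type*}

theorem linearIndepOn_iff_diff_singleton [DivisionRing K] [AddCommGroup M] [Module K M]
    {v : ι → M} {s : Set ι} {a : ι} (ha : a ∈ s) :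
    LinearIndepOn K v s ↔
      LinearIndepOn K v (s \ {a}) ∧ v a ∉ Submodule.span K (v '' (s \ {a})) := by
  rw [← linearIndepOn_insert (fun h => h.2 rfl), Set.insert_sdiff_singleton,
    Set.insert_eq_of_mem ha]

theorem notMem_span_image_of_map_eq_zero [Semiring R] [AddCommMonoid M] [Module R M]
    [AddCommMonoid N] [Module R N] (f : M →ₗ[R] N) {v : ι → M} {s : Set ι} {x : M}
    (hs : ∀ i ∈ s, f (v i) = 0) (hx : f x ≠ 0) : x ∉ Submodule.span R (v '' s) := by
  have : Submodule.span R (v '' s) ≤ LinearMap.ker f :=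
    Submodule.span_le.2 (Set.image_subset_iff.2 hs)
  exact fun h => hx (this h)

end LinearAlgebra

namespace DirichletPaper

open SimpleGraph

section EdgeDifference

variable {V R M N : Type*} [Ring R] [AddCommGroup M] [Module R M] {G : SimpleGraph V}
  {φ : V → M} {w : Sym2 V → M}

def IsEdgeDifference (G : SimpleGraph V) (φ : V → M) (w : Sym2 V → M) : Prop :=
  ∀ ⦃i j⦄, G.Adj i j → w s(i, j) = φ i - φ j ∨ w s(i, j) = φ j - φ i

namespace IsEdgeDifference

theorem sub_mem_iff (hw : IsEdgeDifference G φ w) {P : Submodule R M} {i j : V}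
    (h : G.Adj i j) : φ i - φ j ∈ P ↔ w s(i, j) ∈ P := by
  rcases hw h with h | h
  · rw [h]
  · rw [h, ← neg_sub, P.neg_mem_iff]

theorem map_eq_zero_iff [AddCommGroup N] [Module R N] (hw : IsEdgeDifference G φ w)
    (f : M →ₗ[R] N) {i j : V} (h : G.Adj i j) : f (w s(i, j)) = 0 ↔ f (φ i) = f (φ j) := by
  rcases hw h with h | h
  · rw [h, map_sub, sub_eq_zero]
  · rw [h, map_sub, sub_eq_zero, eq_comm]

theorem sub_mem_of_walk (hw : IsEdgeDifference G φ w) {a b : V} (p : G.Walk a b)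
    {P : Submodule R M} (hP : ∀ e ∈ p.edges, w e ∈ P) : φ a - φ b ∈ P := by
  induction p with
  | nil => simp
  | @cons a c b h q ih =>
    simp only [Walk.edges_cons, List.mem_cons, forall_eq_or_imp] at hP
    rw [← sub_add_sub_cancel (φ a) (φ c) (φ b)]
    exact P.add_mem ((hw.sub_mem_iff h).2 hP.1) (ih hP.2)

theorem mem_of_mem_edges_of_isTrail (hw : IsEdgeDifference G φ w) {a b : V} (p : G.Walk a b)
    (hp : p.IsTrail) {e : Sym2 V} (he : e ∈ p.edges) {P : Submodule R M}
    (hP : ∀ f ∈ p.edges, f ≠ e → w f ∈ P) (hab : φ a - φ b ∈ P) : w e ∈ P := by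
  induction p with
  | nil => simp at he
  | @cons a c b h q ih =>
    rw [Walk.isTrail_cons] at hp
    simp only [Walk.edges_cons, List.mem_cons, forall_eq_or_imp] at he hP
    by_cases hea : e = s(a, c)
    · subst hea
      have hcb : φ c - φ b ∈ P :=
        hw.sub_mem_of_walk q fun f hf => hP.2 f hf fun h => hp.2 (h ▸ hf)
      rw [← hw.sub_mem_iff h, ← sub_sub_sub_cancel_right (φ a) (φ c) (φ b)]
      exact P.sub_mem hab hcb
    · have hac : φ a - φ c ∈ P := (hw.sub_mem_iff h).2 (hP.1 (Ne.symm hea))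
      refine ih hp.1 (he.resolve_left hea) hP.2 ?_
      rw [← sub_sub_sub_cancel_left (φ b) (φ c) (φ a)]
      exact P.sub_mem hab hac

end IsEdgeDifference

end EdgeDifference

section Forests

variable {V : Type*} {Γ : SimpleGraph V} {B : Finset V}

theorem mem_of_mem_edges_fromEdgeSet {S : Set (Sym2 V)} {a b : V} {e : Sym2 V}
    (c : (fromEdgeSet S).Walk a b) (he : e ∈ c.edges) : e ∈ S := by
  have := c.edges_subset_edgeSet he
  rw [edgeSet_fromEdgeSet] at this
  exact this.1

theorem isAcyclic_fromEdgeSet_iff {S : Set (Sym2 V)} (hS : S ⊆ Γ.edgeSet) :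
    (fromEdgeSet S).IsAcyclic ↔ ∀ (a : V) (c : Γ.Walk a a), c.IsCycle → ¬ ∀ e ∈ c.edges, e ∈ S := by
  refine ⟨fun h a c hc hcS => ?_, fun h a c hc => ?_⟩
  · have hsub : ∀ e ∈ c.edges, e ∈ (fromEdgeSet S).edgeSet := fun e he => by
      rw [edgeSet_fromEdgeSet]
      exact ⟨hcS e he, Γ.not_isDiag_of_mem_edgeSet (c.edges_subset_edgeSet he)⟩
    exact h _ (hc.transfer hsub)
  · have hsub : ∀ e ∈ c.edges, e ∈ Γ.edgeSet := fun e he => hS (mem_of_mem_edges_fromEdgeSet c he)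
    exact h a _ (hc.transfer hsub) fun e he => mem_of_mem_edges_fromEdgeSet c (by simpa using he)

theorem reachable_fromEdgeSet_of_walk {S : Set (Sym2 V)} {a b : V} (p : Γ.Walk a b)
    (hp : ∀ e ∈ p.edges, e ∈ S) : (fromEdgeSet S).Reachable a b := by
  refine (p.transfer _ fun e he => ?_).reachable
  rw [edgeSet_fromEdgeSet]
  exact ⟨hp e he, Γ.not_isDiag_of_mem_edgeSet (p.edges_subset_edgeSet he)⟩

theorem isGrove_of_forall_reachable {F : Finset (Sym2 V)} (hF : (F : Set (Sym2 V)) ⊆ Γ.edgeSet)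
    (hac : (fromEdgeSet (F : Set (Sym2 V))).IsAcyclic)
    (hreach : ∀ z, ∃ b ∈ B, (fromEdgeSet (F : Set (Sym2 V))).Reachable z b) :
    IsGrove Γ B F := by
  refine ⟨hF, hac, fun z hz => ?_, hreach⟩
  obtain ⟨b, hb, ⟨p⟩⟩ := hreach z
  cases p with
  | nil => exact absurd hb hz
  | cons h _ => exact ⟨_, ((fromEdgeSet_adj _).1 h).1, Sym2.mem_mk_left _ _⟩

end Forests

section Extension

variable {V : Type*} [Fintype V] {G : SimpleGraph V} {B : Finset V}

theorem exists_isPath_extend_to_boundary (hG : G.IsAcyclic)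
    (hnoleaf : ∀ x ∉ B, ∀ y, G.Adj x y → ∃ z, G.Adj x z ∧ z ≠ y) {x y : V} (p : G.Walk x y)
    (hp : p.IsPath) (hnil : ¬ p.Nil) (hint : ∀ z ∈ p.support, z ≠ x → z ≠ y → z ∉ B) :
    ∃ (x' : V) (q : G.Walk x' y), q.IsPath ∧ x' ∈ B ∧
      (∀ z ∈ q.support, z ≠ x' → z ≠ y → z ∉ B) ∧ p.edges ⊆ q.edges := by
  by_cases hx : x ∈ B
  · exact ⟨x, p, hp, hx, hint, List.Subset.refl _⟩
  obtain ⟨z, hxz, hz⟩ := hnoleaf x hx _ (p.adj_snd hnil)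
  have hzp : z ∉ p.support := fun h => hz (hG.eq_snd_of_adj_start hp hxz h)
  have hp' : (Walk.cons hxz.symm p).IsPath := (Walk.cons_isPath_iff _ _).2 ⟨hp, hzp⟩
  have hlen := hp'.length_lt
  have hint' : ∀ v ∈ (Walk.cons hxz.symm p).support, v ≠ z → v ≠ y → v ∉ B := by
    intro v hv hvz hvy
    rw [Walk.support_cons, List.mem_cons] at hv
    rcases hv with rfl | hv
    · exact absurd rfl hvz
    by_cases hvx : v = x
    · exact hvx ▸ hx
    · exact hint v hv hvx hvy
  obtain ⟨x', q, hq, hx', hqint, hpq⟩ :=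
    exists_isPath_extend_to_boundary hG hnoleaf _ hp' Walk.not_nil_cons hint'
  exact ⟨x', q, hq, hx', hqint, fun e he => hpq (List.mem_cons_of_mem _ he)⟩
termination_by Fintype.card V - p.length
decreasing_by simp only [Walk.length_cons] at hlen ⊢; omega

theorem exists_crossing_through (hG : G.IsAcyclic)
    (hnoleaf : ∀ x ∉ B, ∀ y, G.Adj x y → ∃ z, G.Adj x z ∧ z ≠ y) {a c : V} (h : G.Adj a c) :
    ∃ (b b' : V) (p : G.Walk b b'), p.IsPath ∧ b ∈ B ∧ b' ∈ B ∧ b ≠ b' ∧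
      (∀ z ∈ p.support, z ≠ b → z ≠ b' → z ∉ B) ∧ s(a, c) ∈ p.edges := by
  obtain ⟨x, q, hq, hx, hqint, hsub⟩ := exists_isPath_extend_to_boundary hG hnoleaf h.toWalk
    (Walk.IsPath.of_adj h) Walk.not_nil_cons (by simp +contextual)
  have hacq : s(a, c) ∈ q.edges := hsub (by simp)
  obtain ⟨b, r, hr, hb, hrint, hsub'⟩ := exists_isPath_extend_to_boundary hG hnoleaf q.reverse
    hq.reverse (Walk.edges_eq_nil.not.mp (List.ne_nil_of_mem (by simpa using hacq)))
    (fun z hz hzc hzx => hqint z (by simpa using hz) hzx hzc)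
  have hacr : s(a, c) ∈ r.edges := hsub' (by simpa using hacq)
  refine ⟨b, x, r, hr, hb, hx, ?_, hrint, hacr⟩
  rintro rfl
  simp [Walk.edges_eq_nil.2 (Walk.isPath_iff_nil.1 hr)] at hacr

end Extension

section Network

variable {V : Type*} [DecidableEq V] {Γ : SimpleGraph V} {B : Finset V} {u : V → ℝ}

section Potential

def potential (B : Finset V) (u : V → ℝ) (w : V) : ({w : V // w ∉ B} → ℝ) × ℝ :=
  if h : w ∈ B then (0, u w) else (Pi.single ⟨w, h⟩ 1, 0)

theorem potential_fst_apply (x : V) (w : {w : V // w ∉ B}) :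
    (potential B u x).1 w = if x = w.1 then 1 else 0 := by
  by_cases hx : x ∈ B
  · have : x ≠ w.1 := fun h => w.2 (h ▸ hx)
    simp [potential, hx, this]
  · simp [potential, hx, Pi.single_apply, Subtype.ext_iff, eq_comm]

theorem potential_sub_potential {b b' : V} (hb : b ∈ B) (hb' : b' ∈ B) :
    potential B u b - potential B u b' = (u b - u b') • ((0, 1) : ({w : V // w ∉ B} → ℝ) × ℝ) := by
  simp [potential, hb, hb']

theorem isEdgeDifference_potential {v : Option (Sym2 V) → ({w : V // w ∉ B} → ℝ) × ℝ}
    (hB : ∀ i ∈ B, ∀ j ∈ B, ¬ Γ.Adj i j)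
    (hvE : ∀ i j : V, Γ.Adj i j →
      (∀ (hi : i ∉ B) (hj : j ∉ B),
        v (some s(i, j)) = (Pi.single ⟨i, hi⟩ 1 - Pi.single ⟨j, hj⟩ 1, 0) ∨
        v (some s(i, j)) = (Pi.single ⟨j, hj⟩ 1 - Pi.single ⟨i, hi⟩ 1, 0)) ∧
      (∀ (hi : i ∉ B), j ∈ B → v (some s(i, j)) = (Pi.single ⟨i, hi⟩ 1, -u j))) :
    IsEdgeDifference Γ (potential B u) (fun e => v (some e)) := by
  intro i j h
  dsimp only
  by_cases hi : i ∈ B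
  · have hj : j ∉ B := fun hj => hB i hi j hj h
    right
    rw [Sym2.eq_swap, (hvE j i h.symm).2 hj hi]
    simp [potential, hi, hj]
  by_cases hj : j ∈ B
  · left
    rw [(hvE i j h).2 hi hj]
    simp [potential, hi, hj]
  · rcases (hvE i j h).1 hi hj with h' | h' <;> rw [h'] <;> simp [potential, hi, hj]

variable [Fintype V]

def levelFunctional (B : Finset V) (c : ℝ) : (({w : V // w ∉ B} → ℝ) × ℝ) →ₗ[ℝ] ℝ :=
  LinearMap.snd ℝ _ ℝ + c • ∑ w, (LinearMap.proj w).comp (LinearMap.fst ℝ _ ℝ)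

theorem levelFunctional_potential (c : ℝ) (x : V) :
    levelFunctional B c (potential B u x) = if x ∈ B then u x else c := by
  by_cases hx : x ∈ B <;> simp [levelFunctional, potential, hx, Pi.single_apply]

end Potential

def IsObstructed (Γ : SimpleGraph V) (B : Finset V) (X : Finset (Option (Sym2 V))) : Prop :=
  (∃ (a : V) (w : Γ.Walk a a), w.IsCycle ∧ ∀ e ∈ w.edges, some e ∈ X) ∨
  (∃ C₁ C₂ : Finset (Sym2 V), IsCrossing Γ B C₁ ∧ IsCrossing Γ B C₂ ∧ C₁ ≠ C₂ ∧
    (∀ e ∈ C₁, some e ∈ X) ∧ (∀ e ∈ C₂, some e ∈ X)) ∨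
  (none ∈ X ∧ ∃ C, IsCrossing Γ B C ∧ ∀ e ∈ C, some e ∈ X)

theorem IsObstructed.mono {X Y : Finset (Option (Sym2 V))} (hXY : X ⊆ Y)
    (h : IsObstructed Γ B X) : IsObstructed Γ B Y := by
  rcases h with ⟨a, w, hw, hX⟩ | ⟨C₁, C₂, h₁, h₂, hne, hX₁, hX₂⟩ | ⟨hn, C, hC, hX⟩
  · exact Or.inl ⟨a, w, hw, fun e he => hXY (hX e he)⟩
  · exact Or.inr (Or.inl ⟨C₁, C₂, h₁, h₂, hne, fun e he => hXY (hX₁ e he),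
      fun e he => hXY (hX₂ e he)⟩)
  · exact Or.inr (Or.inr ⟨hXY hn, C, hC, fun e he => hXY (hX e he)⟩)

section Dependence

variable {v : Option (Sym2 V) → ({w : V // w ∉ B} → ℝ) × ℝ}

theorem zero_one_mem_of_isCrossing (hu : Set.InjOn u B)
    (hv : IsEdgeDifference Γ (potential B u) (fun e => v (some e))) {C : Finset (Sym2 V)}
    (hC : IsCrossing Γ B C) {P : Submodule ℝ (({w : V // w ∉ B} → ℝ) × ℝ)}
    (hP : ∀ e ∈ C, v (some e) ∈ P) : (0, 1) ∈ P := by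
  obtain ⟨b, b', p, -, hb, hb', hbb', -, rfl⟩ := hC
  have h := hv.sub_mem_of_walk p fun e he => hP e (List.mem_toFinset.2 he)
  rw [potential_sub_potential hb hb'] at h
  have hne : u b - u b' ≠ 0 := sub_ne_zero.2 fun h => hbb' (hu hb hb' h)
  simpa [smul_smul, inv_mul_cancel₀ hne] using P.smul_mem (u b - u b')⁻¹ h

theorem not_linearIndepOn_of_isObstructed (hu : Set.InjOn u B) (hvhat : v none = (0, 1))
    (hv : IsEdgeDifference Γ (potential B u) (fun e => v (some e)))
    {X : Finset (Option (Sym2 V))} (h : IsObstructed Γ B X) :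
    ¬ LinearIndepOn ℝ v (X : Set (Option (Sym2 V))) := by
  set P := fun a => Submodule.span ℝ (v '' ((X : Set (Option (Sym2 V))) \ {a}))
  have hP : ∀ {a b}, b ∈ X → b ≠ a → v b ∈ P a :=
    fun hb hba => Submodule.subset_span ⟨_, ⟨hb, hba⟩, rfl⟩
  suffices ∃ a ∈ X, v a ∈ P a by
    obtain ⟨a, ha, hspan⟩ := this
    rw [linearIndepOn_iff_diff_singleton (Finset.mem_coe.2 ha)]
    exact fun h => h.2 hspan
  rcases h with ⟨a, c, hc, hcX⟩ | ⟨C₁, C₂, hC₁, hC₂, hne, hC₁X, hC₂X⟩ | ⟨hn, C, hC, hCX⟩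
  · obtain ⟨e, he⟩ := List.exists_mem_of_ne_nil _ (Walk.edges_eq_nil.not.2 hc.not_nil)
    refine ⟨some e, hcX e he, hv.mem_of_mem_edges_of_isTrail c hc.isTrail he
      (fun f hf hfe => hP (hcX f hf) (by simpa using hfe)) (by simp)⟩
  · have key : ∀ {C C' : Finset (Sym2 V)}, IsCrossing Γ B C → IsCrossing Γ B C' →
        (∀ e ∈ C, some e ∈ X) → (∀ e ∈ C', some e ∈ X) → ¬ C ⊆ C' → ∃ a ∈ X, v a ∈ P a := by
      intro C C' hC hC' hCX hC'X hsub
      obtain ⟨e, heC, heC'⟩ := Finset.not_subset.1 hsub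
      have hδ : (0, 1) ∈ P (some e) := zero_one_mem_of_isCrossing hu hv hC' fun f hf =>
        hP (hC'X f hf) fun h => heC' (Option.some_injective _ h ▸ hf)
      obtain ⟨b, b', p, hp, hb, hb', -, -, rfl⟩ := hC
      refine ⟨some e, hCX e heC, hv.mem_of_mem_edges_of_isTrail p hp.isTrail
        (List.mem_toFinset.1 heC) (fun f hf hfe => hP (hCX f (List.mem_toFinset.2 hf))
        (by simpa using hfe)) ?_⟩
      rw [potential_sub_potential hb hb']
      exact (P _).smul_mem _ hδ
    by_cases h₁₂ : C₁ ⊆ C₂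
    · exact key hC₂ hC₁ hC₂X hC₁X fun h₂₁ => hne (Finset.Subset.antisymm h₁₂ h₂₁)
    · exact key hC₁ hC₂ hC₁X hC₂X h₁₂
  · exact ⟨none, hn, hvhat ▸ zero_one_mem_of_isCrossing hu hv hC fun e he =>
      hP (hCX e he) (Option.some_ne_none e)⟩

end Dependence

section Groves

theorem exists_boundary_reachable_of_mem_edges {S : Set (Sym2 V)} {b₁ b₂ x y : V}
    (p : Γ.Walk b₁ b₂) (hp : p.IsTrail) (hb₁ : b₁ ∈ B) (hb₂ : b₂ ∈ B) (hxy : s(x, y) ∈ p.edges)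
    (hS : ∀ e ∈ p.edges, e ≠ s(x, y) → e ∈ S) :
    ∃ b ∈ B, (fromEdgeSet S).Reachable x b := by
  have hx : x ∈ p.support := p.fst_mem_support_of_mem_edges hxy
  have hdisj := hp.edges_nodup
  rw [← p.take_spec hx, Walk.edges_append] at hdisj
  by_cases h : s(x, y) ∈ (p.dropUntil x hx).edges
  · refine ⟨b₁, hb₁, (reachable_fromEdgeSet_of_walk (p.takeUntil x hx) fun e he =>
      hS e (p.edges_takeUntil_subset_edges hx he) ?_).symm⟩
    rintro rfl
    exact List.disjoint_of_nodup_append hdisj he h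
  · exact ⟨b₂, hb₂, reachable_fromEdgeSet_of_walk (p.dropUntil x hx) fun e he =>
      hS e (p.edges_dropUntil_subset_edges hx he) (by rintro rfl; exact h he)⟩

theorem not_isObstructed_of_indep {X : Finset (Option (Sym2 V))} (h : Indep Γ B X) :
    ¬ IsObstructed Γ B X := by
  have hsub : ∀ {F C : Finset (Sym2 V)}, X ⊆ insert none (F.image some) →
      (∀ e ∈ C, some e ∈ X) → C ⊆ F :=
    fun hXF hC e he => by simpa using hXF (hC e he)
  have hcyc : ∀ {F : Finset (Sym2 V)}, IsGrove Γ B F → X ⊆ insert none (F.image some) →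
      ¬ ∃ (a : V) (w : Γ.Walk a a), w.IsCycle ∧ ∀ e ∈ w.edges, some e ∈ X :=
    fun hF hXF ⟨a, c, hc, hcX⟩ =>
      (isAcyclic_fromEdgeSet_iff hF.1).1 hF.2.1 a c hc fun e he => by simpa using hXF (hcX e he)
  rcases h with ⟨F, ⟨hF, C, -, huniq⟩, hXF⟩ | ⟨F, ⟨hF, hnoC⟩, hXF⟩
  · replace hXF' := hXF.trans (Finset.subset_insert none _)
    rintro (hc | ⟨C₁, C₂, h₁, h₂, hne, hC₁, hC₂⟩ | ⟨hn, -⟩)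
    · exact hcyc hF hXF' hc
    · exact hne ((huniq C₁ ⟨h₁, hsub hXF' hC₁⟩).trans (huniq C₂ ⟨h₂, hsub hXF' hC₂⟩).symm)
    · simpa using hXF hn
  · rintro (hc | ⟨C₁, -, h₁, -, -, hC₁, -⟩ | ⟨-, C, hC, hCX⟩)
    · exact hcyc hF hXF hc
    · exact hnoC C₁ h₁ (hsub hXF hC₁)
    · exact hnoC C hC (hsub hXF hCX)

variable [Fintype V]

theorem some_mem_ground_iff {e : Sym2 V} : some e ∈ ground Γ ↔ e ∈ Γ.edgeSet := by
  simp [ground]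

theorem coe_eraseNone_subset_edgeSet {X : Finset (Option (Sym2 V))} (hX : X ⊆ ground Γ) :
    (X.eraseNone : Set (Sym2 V)) ⊆ Γ.edgeSet := fun _ he =>
  some_mem_ground_iff.1 (hX (Finset.mem_eraseNone.1 he))

theorem fromEdgeSet_eraseNone_le {X : Finset (Option (Sym2 V))} (hX : X ⊆ ground Γ) :
    fromEdgeSet (X.eraseNone : Set (Sym2 V)) ≤ Γ := fun _ _ h =>
  coe_eraseNone_subset_edgeSet hX ((fromEdgeSet_adj _).1 h).1

theorem isAcyclic_of_not_isObstructed {X : Finset (Option (Sym2 V))} (hX : X ⊆ ground Γ)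
    (h : ¬ IsObstructed Γ B X) : (fromEdgeSet (X.eraseNone : Set (Sym2 V))).IsAcyclic :=
  (isAcyclic_fromEdgeSet_iff (coe_eraseNone_subset_edgeSet hX)).2 fun a c hc hcX =>
    h (Or.inl ⟨a, c, hc, fun e he => by simpa using hcX e he⟩)

theorem not_isObstructed_insert {X : Finset (Option (Sym2 V))} (hX : X ⊆ ground Γ)
    (hobs : ¬ IsObstructed Γ B X) {x y : V} (hxy : Γ.Adj x y)
    (hx : ¬ ∃ b ∈ B, (fromEdgeSet (X.eraseNone : Set (Sym2 V))).Reachable x b)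
    (hy : ∃ b ∈ B, (fromEdgeSet (X.eraseNone : Set (Sym2 V))).Reachable y b) :
    ¬ IsObstructed Γ B (insert (some s(x, y)) X) := by
  set S : Set (Sym2 V) := ↑X.eraseNone
  have hcross : ∀ C, IsCrossing Γ B C → (∀ e ∈ C, some e ∈ insert (some s(x, y)) X) →
      ∀ e ∈ C, some e ∈ X := by
    rintro _ ⟨b₁, b₂, p, hp, hb₁, hb₂, -, -, rfl⟩ hC e he
    have hxyp : s(x, y) ∉ p.edges := fun hxyp =>
      hx (exists_boundary_reachable_of_mem_edges p hp.isTrail hb₁ hb₂ hxyp fun f hf hfxy => by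
        simpa [S, hfxy] using hC f (List.mem_toFinset.2 hf))
    have hexy : e ≠ s(x, y) := by rintro rfl; exact hxyp (List.mem_toFinset.1 he)
    simpa [hexy] using hC e he
  have hnr : ¬ (fromEdgeSet S).Reachable x y := fun h =>
    hx (hy.imp fun b ⟨hb, hr⟩ => ⟨hb, h.trans hr⟩)
  have hac := (isAcyclic_of_not_isObstructed hX hobs).sup_edge_of_not_reachable hnr
  rw [edge, ← fromEdgeSet_union, isAcyclic_fromEdgeSet_iff
    (Set.union_subset (coe_eraseNone_subset_edgeSet hX) (Set.singleton_subset_iff.2 hxy))] at hac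
  rintro (⟨a, c, hc, hcX⟩ | ⟨C₁, C₂, h₁, h₂, hne, hC₁, hC₂⟩ | ⟨hn, C, hC, hCX⟩)
  · exact hac a c hc fun e he => by simpa [S, or_comm] using hcX e he
  · exact hobs (Or.inr (Or.inl ⟨C₁, C₂, h₁, h₂, hne, hcross C₁ h₁ hC₁, hcross C₂ h₂ hC₂⟩))
  · exact hobs (Or.inr (Or.inr ⟨by simpa using hn, C, hC, hcross C hC hCX⟩))

theorem exists_reachable_boundary_of_maximal (hconn : Γ.Connected) (hB : B.Nonempty)
    {Y : Finset (Option (Sym2 V))}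
    (hY : Maximal (fun Y => Y ⊆ ground Γ ∧ ¬ IsObstructed Γ B Y) Y) (z : V) :
    ∃ b ∈ B, (fromEdgeSet (Y.eraseNone : Set (Sym2 V))).Reachable z b := by
  by_contra hz
  obtain ⟨b₀, hb₀⟩ := hB
  obtain ⟨p⟩ := hconn.preconnected z b₀
  obtain ⟨d, -, hd, hd'⟩ := p.exists_boundary_dart
    {x | ¬ ∃ b ∈ B, (fromEdgeSet (Y.eraseNone : Set (Sym2 V))).Reachable x b} hz
    (fun h => h ⟨b₀, hb₀, .rfl⟩)
  replace hd' := of_not_not hd'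
  have hins := hY.eq_of_ge ⟨Finset.insert_subset (some_mem_ground_iff.2 d.adj) hY.1.1,
    not_isObstructed_insert hY.1.1 hY.1.2 d.adj hd hd'⟩ (Finset.subset_insert _ _)
  have hdY : some s(d.fst, d.snd) ∈ Y := hins ▸ Finset.mem_insert_self _ _
  obtain ⟨b, hb, hr⟩ := hd'
  exact hd ⟨b, hb,
    ((fromEdgeSet_adj _).2 ⟨Finset.mem_eraseNone.2 hdY, d.adj.ne⟩).reachable.trans hr⟩

theorem indep_of_not_isObstructed (hconn : Γ.Connected) (hB : B.Nonempty)
    {X : Finset (Option (Sym2 V))} (hX : X ⊆ ground Γ) (hobs : ¬ IsObstructed Γ B X) :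
    Indep Γ B X := by
  obtain ⟨Y, hXY, hY⟩ :=
    Finite.exists_le_maximal (p := fun Y => Y ⊆ ground Γ ∧ ¬ IsObstructed Γ B Y) ⟨hX, hobs⟩
  have hgrove : IsGrove Γ B Y.eraseNone :=
    isGrove_of_forall_reachable (coe_eraseNone_subset_edgeSet hY.1.1)
      (isAcyclic_of_not_isObstructed hY.1.1 hY.1.2)
      (exists_reachable_boundary_of_maximal hconn hB hY)
  have hsub : ∀ C ⊆ Y.eraseNone, ∀ e ∈ C, some e ∈ Y := fun C hC e he =>
    Finset.mem_eraseNone.1 (hC he)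
  by_cases hcr : ∃ C, IsCrossing Γ B C ∧ C ⊆ Y.eraseNone
  · obtain ⟨C, hC, hCY⟩ := hcr
    have hn : none ∉ Y := fun hn => hY.1.2 (Or.inr (Or.inr ⟨hn, C, hC, hsub C hCY⟩))
    refine Or.inl ⟨Y.eraseNone, ⟨hgrove, C, ⟨hC, hCY⟩, fun C' ⟨hC', hC'Y⟩ => ?_⟩, ?_⟩
    · by_contra hne
      exact hY.1.2 (Or.inr (Or.inl ⟨C', C, hC', hC, hne, hsub C' hC'Y, hsub C hCY⟩))
    · rwa [Finset.image_some_eraseNone, Finset.erase_eq_of_notMem hn]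
  · refine Or.inr ⟨Y.eraseNone, ⟨hgrove, fun C hC hCY => hcr ⟨C, hC, hCY⟩⟩, ?_⟩
    rw [Finset.image_some_eraseNone]
    exact hXY.trans (Finset.insert_erase_subset _ _)

end Groves

section Independence

variable {v : Option (Sym2 V) → ({w : V // w ∉ B} → ℝ) × ℝ}

theorem notMem_span_of_leaf (hvhat : v none = (0, 1))
    (hv : IsEdgeDifference Γ (potential B u) (fun e => v (some e))) {x y : V} (hx : x ∉ B)
    (hxy : Γ.Adj x y) {s : Set (Option (Sym2 V))}
    (hs : ∀ a ∈ s, a = none ∨ ∃ e ∈ Γ.edgeSet, x ∉ e ∧ a = some e) :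
    v (some s(x, y)) ∉ Submodule.span ℝ (v '' s) := by
  set f := (LinearMap.proj (R := ℝ) (φ := fun _ : {w : V // w ∉ B} => ℝ) ⟨x, hx⟩).comp
    (LinearMap.fst ℝ _ ℝ)
  have hf : ∀ z, f (potential B u z) = if z = x then 1 else 0 := fun z => potential_fst_apply z _
  refine notMem_span_image_of_map_eq_zero f (fun a ha => ?_) fun h => ?_
  · rcases hs a ha with rfl | ⟨e, he, hxe, rfl⟩
    · simp [f, hvhat]
    · induction e using Sym2.ind with | _ p r => ?_
      simp only [Sym2.mem_iff, not_or] at hxe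
      exact (hv.map_eq_zero_iff f he).2 (by simp [hf, Ne.symm hxe.1, Ne.symm hxe.2])
  · simpa [hf, hxy.ne'] using (hv.map_eq_zero_iff f hxy).1 h

variable [Fintype V]

theorem notMem_span_of_crossing (hu : Set.InjOn u B)
    (hv : IsEdgeDifference Γ (potential B u) (fun e => v (some e))) {G : SimpleGraph V}
    (hGΓ : G ≤ Γ) {b b' z : V} (hb : b ∈ B) (hb' : b' ∈ B) (hbb' : b ≠ b') (h : G.Adj b z)
    (q : G.Walk z b') (hp : (Walk.cons h q).IsPath)
    (hint : ∀ x ∈ (Walk.cons h q).support, x ≠ b → x ≠ b' → x ∉ B)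
    {s : Set (Option (Sym2 V))} (hs : ∀ a ∈ s, ∃ e ∈ q.edges, a = some e) :
    v (some s(b, z)) ∉ Submodule.span ℝ (v '' s) := by
  set f := levelFunctional B (u b')
  have hbq : b ∉ q.support := ((Walk.cons_isPath_iff h q).1 hp).2
  have hlevel : ∀ x ∈ q.support, f (potential B u x) = u b' := by
    intro x hx
    rw [levelFunctional_potential]
    split_ifs with hxB
    · obtain rfl : x = b' := by_contra fun hxb' =>
        hint x (List.mem_cons_of_mem _ hx) (ne_of_mem_of_not_mem hx hbq) hxb' hxB
      rfl
    · rfl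
  refine notMem_span_image_of_map_eq_zero f (fun a ha => ?_) fun h' => ?_
  · obtain ⟨e, he, rfl⟩ := hs a ha
    induction e using Sym2.ind with | _ x y => ?_
    exact (hv.map_eq_zero_iff f (hGΓ (q.adj_of_mem_edges he))).2 <| by
      rw [hlevel x (q.fst_mem_support_of_mem_edges he),
        hlevel y (q.snd_mem_support_of_mem_edges he)]
  · have := (hv.map_eq_zero_iff f (hGΓ h)).1 h'
    rw [hlevel z q.start_mem_support, levelFunctional_potential, if_pos hb] at this
    exact hbb' (hu hb hb' this)

theorem exists_crossing_containing_edges_of_no_leaf {X : Finset (Option (Sym2 V))}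
    (hX : X ⊆ ground Γ) (hobs : ¬ IsObstructed Γ B X)
    (hnoleaf : ∀ x ∉ B, ∀ y, (fromEdgeSet (X.eraseNone : Set (Sym2 V))).Adj x y →
      ∃ z, (fromEdgeSet (X.eraseNone : Set (Sym2 V))).Adj x z ∧ z ≠ y)
    {a c : V} (hac : some s(a, c) ∈ X) :
    ∃ (b b' : V) (p : (fromEdgeSet (X.eraseNone : Set (Sym2 V))).Walk b b'), p.IsPath ∧
      b ∈ B ∧ b' ∈ B ∧ b ≠ b' ∧ (∀ z ∈ p.support, z ≠ b → z ≠ b' → z ∉ B) ∧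
      none ∉ X ∧ ∀ e, some e ∈ X → e ∈ p.edges := by
  set G := fromEdgeSet (X.eraseNone : Set (Sym2 V))
  have hGadj : ∀ {x y}, G.Adj x y ↔ some s(x, y) ∈ X := fun {x y} => by
    refine ⟨fun h => Finset.mem_eraseNone.1 ((fromEdgeSet_adj _).1 h).1, fun h => ?_⟩
    exact (fromEdgeSet_adj _).2 ⟨Finset.mem_eraseNone.2 h, (some_mem_ground_iff.1 (hX h)).ne⟩
  have hGΓ : G ≤ Γ := fromEdgeSet_eraseNone_le hX
  have hG := isAcyclic_of_not_isObstructed hX hobs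
  have hcross : ∀ {b b' : V} (p : G.Walk b b'), p.IsPath → b ∈ B → b' ∈ B → b ≠ b' →
      (∀ z ∈ p.support, z ≠ b → z ≠ b' → z ∉ B) →
      IsCrossing Γ B p.edges.toFinset ∧ ∀ e ∈ p.edges.toFinset, some e ∈ X :=
    fun p hp hb hb' hne hint => ⟨⟨_, _, p.mapLe hGΓ, hp.mapLe hGΓ, hb, hb', hne,
      by simpa using hint, by simp⟩, fun e he => Finset.mem_eraseNone.1
        (mem_of_mem_edges_fromEdgeSet p (List.mem_toFinset.1 he))⟩
  obtain ⟨b, b', p, hp, hb, hb', hne, hint, -⟩ := exists_crossing_through hG hnoleaf (hGadj.2 hac)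
  obtain ⟨hC, hCX⟩ := hcross p hp hb hb' hne hint
  refine ⟨b, b', p, hp, hb, hb', hne, hint, fun hn => hobs (Or.inr (Or.inr ⟨hn, _, hC, hCX⟩)),
    fun e he => ?_⟩
  induction e using Sym2.ind with | _ x y => ?_
  by_contra hxy
  obtain ⟨d, d', q, hq, hd, hd', hdd', hqint, hxyq⟩ :=
    exists_crossing_through hG hnoleaf (hGadj.2 he)
  obtain ⟨hC', hC'X⟩ := hcross q hq hd hd' hdd' hqint
  refine hobs (Or.inr (Or.inl ⟨_, _, hC, hC', fun h => hxy ?_, hCX, hC'X⟩))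
  exact List.mem_toFinset.1 (h ▸ List.mem_toFinset.2 hxyq)

theorem exists_notMem_span_of_no_leaf (hu : Set.InjOn u B) (hvhat : v none = (0, 1))
    (hv : IsEdgeDifference Γ (potential B u) (fun e => v (some e)))
    {X : Finset (Option (Sym2 V))} (hX : X ⊆ ground Γ) (hobs : ¬ IsObstructed Γ B X)
    (hne : X.Nonempty)
    (hnoleaf : ∀ x ∉ B, ∀ y, (fromEdgeSet (X.eraseNone : Set (Sym2 V))).Adj x y →
      ∃ z, (fromEdgeSet (X.eraseNone : Set (Sym2 V))).Adj x z ∧ z ≠ y) :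
    ∃ a ∈ X, v a ∉ Submodule.span ℝ (v '' ((X : Set (Option (Sym2 V))) \ {a})) := by
  by_cases hedge : ∃ a c, some s(a, c) ∈ X
  · obtain ⟨a, c, hac⟩ := hedge
    obtain ⟨b, b', p, hp, hb, hb', hbb', hint, hn, hall⟩ :=
      exists_crossing_containing_edges_of_no_leaf hX hobs hnoleaf hac
    cases p with
    | nil => exact absurd rfl hbb'
    | cons h q =>
      refine ⟨_, Finset.mem_eraseNone.1 ((fromEdgeSet_adj _).1 h).1, notMem_span_of_crossing hu
        hv (fromEdgeSet_eraseNone_le hX) hb hb' hbb' h q hp hint fun a' ⟨ha', ha'b⟩ => ?_⟩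
      rcases a' with _ | e
      · exact absurd ha' hn
      have := hall e ha'
      rw [Walk.edges_cons, List.mem_cons] at this
      exact ⟨e, this.resolve_left fun h => ha'b (h ▸ rfl), rfl⟩
  · push Not at hedge
    have hnone : ∀ a ∈ X, a = none := by
      rintro (_ | e) ha
      · rfl
      · induction e using Sym2.ind with | _ x y => exact absurd ha (hedge x y)
    obtain ⟨a, ha⟩ := hne
    obtain rfl := hnone a ha
    exact ⟨none, ha, notMem_span_image_of_map_eq_zero (LinearMap.snd ℝ _ ℝ)
      (fun a' ⟨ha', ha'n⟩ => absurd (hnone a' ha') ha'n) (by simp [hvhat])⟩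

theorem exists_notMem_span_of_not_isObstructed (hu : Set.InjOn u B) (hvhat : v none = (0, 1))
    (hv : IsEdgeDifference Γ (potential B u) (fun e => v (some e)))
    {X : Finset (Option (Sym2 V))} (hX : X ⊆ ground Γ) (hobs : ¬ IsObstructed Γ B X)
    (hne : X.Nonempty) :
    ∃ a ∈ X, v a ∉ Submodule.span ℝ (v '' ((X : Set (Option (Sym2 V))) \ {a})) := by
  set G := fromEdgeSet (X.eraseNone : Set (Sym2 V))
  have hGadj : ∀ {x y}, G.Adj x y ↔ some s(x, y) ∈ X ∧ x ≠ y := by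
    simp [G]
  by_cases hleaf : ∃ x ∉ B, ∃ y, G.Adj x y ∧ ∀ z, G.Adj x z → z = y
  · obtain ⟨x, hx, y, hxy, hy⟩ := hleaf
    refine ⟨_, (hGadj.1 hxy).1, notMem_span_of_leaf hvhat hv hx
      (some_mem_ground_iff.1 (hX (hGadj.1 hxy).1)) fun a ⟨ha, hay⟩ => ?_⟩
    rcases a with _ | e
    · exact Or.inl rfl
    refine Or.inr ⟨e, some_mem_ground_iff.1 (hX ha), fun hxe => hay ?_, rfl⟩
    obtain ⟨z, rfl⟩ := Sym2.mem_iff_exists.1 hxe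
    rw [hy z (hGadj.2 ⟨ha, (some_mem_ground_iff.1 (hX ha)).ne⟩)]
    rfl
  push Not at hleaf
  exact exists_notMem_span_of_no_leaf hu hvhat hv hX hobs hne hleaf

theorem linearIndepOn_of_not_isObstructed (hu : Set.InjOn u B) (hvhat : v none = (0, 1))
    (hv : IsEdgeDifference Γ (potential B u) (fun e => v (some e)))
    {X : Finset (Option (Sym2 V))} (hX : X ⊆ ground Γ) (hobs : ¬ IsObstructed Γ B X) :
    LinearIndepOn ℝ v (X : Set (Option (Sym2 V))) := by
  induction X using Finset.strongInduction with
  | H X ih =>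
    rcases X.eq_empty_or_nonempty with rfl | hne
    · simp [linearIndepOn_empty]
    obtain ⟨a, ha, hspan⟩ := exists_notMem_span_of_not_isObstructed hu hvhat hv hX hobs hne
    rw [← Finset.coe_erase] at hspan
    rw [linearIndepOn_iff_diff_singleton (Finset.mem_coe.2 ha), ← Finset.coe_erase]
    exact ⟨ih _ (Finset.erase_ssubset ha) ((Finset.erase_subset _ _).trans hX)
      fun h => hobs (h.mono (Finset.erase_subset _ _)), hspan⟩

end Independence

end Network

variable {V : Type*} [Fintype V] [DecidableEq V]

/-- **Hyperplane (matrix) representation of the Dirichlet matroid**: with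
`u : B → ℝ` injective, `v_e = χ_i − χ_j` for interior edges `e = ij`,
`v_e = χ_i − u(j)·δ` for boundary edges `e = ij` (`j ∈ B`), and `v_ê = δ`, a set
`X ⊆ Ē` indexes a linearly independent family iff `X ⊆ F` for some `F ∈ Σ₁` or
`X ⊆ F ∪ {ê}` for some `F ∈ Σ₀`; equivalently, it is linearly dependent iff `X`
contains the edge set of a cycle of `Γ`, or two distinct crossings of `N`, or
`ê` together with a crossing of `N`. -/
theorem hyperplane_representation
    (Γ : SimpleGraph V) (B : Finset V) (hN : IsNetwork Γ B)
    (u : V → ℝ) (hu : Set.InjOn u (B : Set V))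
    (v : Option (Sym2 V) → ({w : V // w ∉ B} → ℝ) × ℝ)
    (hvhat : v none = (0, 1))
    (hvE : ∀ i j : V, Γ.Adj i j →
      (∀ (hi : i ∉ B) (hj : j ∉ B),
        v (some s(i, j)) = (Pi.single ⟨i, hi⟩ 1 - Pi.single ⟨j, hj⟩ 1, 0) ∨
        v (some s(i, j)) = (Pi.single ⟨j, hj⟩ 1 - Pi.single ⟨i, hi⟩ 1, 0)) ∧
      (∀ (hi : i ∉ B), j ∈ B → v (some s(i, j)) = (Pi.single ⟨i, hi⟩ 1, -u j)))
    (X : Finset (Option (Sym2 V))) (hX : X ⊆ ground Γ) :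
    (LinearIndependent ℝ (fun a : {a // a ∈ X} => v a.1) ↔
      ((∃ F, Sigma1 Γ B F ∧ X ⊆ F.image some) ∨
       (∃ F, Sigma0 Γ B F ∧ X ⊆ insert none (F.image some)))) ∧
    (¬ LinearIndependent ℝ (fun a : {a // a ∈ X} => v a.1) ↔
      ((∃ (a : V) (w : Γ.Walk a a), w.IsCycle ∧ ∀ e ∈ w.edges, some e ∈ X) ∨
       (∃ C₁ C₂ : Finset (Sym2 V), IsCrossing Γ B C₁ ∧ IsCrossing Γ B C₂ ∧ C₁ ≠ C₂ ∧
         (∀ e ∈ C₁, some e ∈ X) ∧ (∀ e ∈ C₂, some e ∈ X)) ∨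
       (none ∈ X ∧ ∃ C, IsCrossing Γ B C ∧ ∀ e ∈ C, some e ∈ X))) := by
  have hv := isEdgeDifference_potential hN.boundary_independent hvE
  have hB : B.Nonempty := Finset.card_pos.1 (zero_lt_two.trans_le hN.two_le_card)
  have hdep : IsObstructed Γ B X → ¬ LinearIndepOn ℝ v (X : Set (Option (Sym2 V))) :=
    not_linearIndepOn_of_isObstructed hu hvhat hv
  have hindep : ¬ IsObstructed Γ B X → LinearIndepOn ℝ v (X : Set (Option (Sym2 V))) :=
    linearIndepOn_of_not_isObstructed hu hvhat hv hX
  exact ⟨⟨fun h => indep_of_not_isObstructed hN.connected hB hX fun hobs => hdep hobs h,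
    fun h => hindep (not_isObstructed_of_indep h)⟩, ⟨not_imp_comm.1 hindep, hdep⟩⟩
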